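/- Let ψ and χ be two almost flows (with γ = 1 and N := N_1 Lipschitz) in the same galaxy (ψ ∼ χ), with ψ Lipschitz, i.e. each ψ_{t,s} is Lipschitz with constant at most 1+δ_T, and suppose N(χ_{t,s}(a)) ≤ (1+δ_T)N(a) for all (s,t), a. Let β_ψ, β_χ ≥ 0 be such that Δ_N(ψ_{t,s}∘ψ_{s,r}, ψ_{t,r}) ≤ β_ψ·ϖ(ω_{r,t}) and Δ_N(χ_{t,s}∘χ_{s,r}, χ_{t,r}) ≤ β_χ·ϖ(ω_{r,t}) for all (r,s,t) ∈ 𝕋₊³. Then for every λ with 1/(1−log₂κ) < λ < 1 such that κ_λ(2+3δ_T+δ_T²) < 2 (which holds for T small enough): Δ_{N,ϖ}(ψ,χ) ≤ 2(2+3δ_T+δ_T²)(β_ψ+β_χ)/(2−κ_λ(2+3δ_T+δ_T²)). -/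

import Mathlib

open Set

noncomputable section

/-- Composition of a two-parameter family of maps along a list of intermediate times:
`compAlong φ s [u₁,…,u_k] t = φ_{t,u_k} ∘ ⋯ ∘ φ_{u₂,u₁} ∘ φ_{u₁,s}`. -/
def compAlong {V : Type*} (φ : ℝ → ℝ → V → V) : ℝ → List ℝ → ℝ → V → V
  | s, [], t => φ t s
  | s, u :: us, t => compAlong φ u us t ∘ φ u s

/-- The iterated (almost) flow `φ^π_{t,s}`: the composition of `φ` along the
points of the partition `π` lying strictly between `s` and `t`. -/
def iterFlow {V : Type*} (φ : ℝ → ℝ → V → V) (π : List ℝ) (t s : ℝ) : V → V :=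
  compAlong φ s (π.filter fun u => decide (s < u) && decide (u < t)) t

/-- A partition of `[0,T]`, as a strictly increasing list of points containing `0` and `T`. -/
structure IntervalPartition (T : ℝ) where
  points : List ℝ
  sorted : points.Pairwise (· < ·)
  zero_mem : 0 ∈ points
  top_mem : T ∈ points
  mem_Icc : ∀ u ∈ points, u ∈ Set.Icc 0 T

/-- The mesh of a partition: the largest gap between successive points. -/
def IntervalPartition.mesh {T : ℝ} (π : IntervalPartition T) : ℝ :=
  ((π.points.zip π.points.tail).map fun p => p.2 - p.1).foldr max 0

/-- A control: a super-additive family `ω` vanishing on the diagonal and small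
near the diagonal. -/
structure IsControl (T : ℝ) (ω : ℝ → ℝ → ℝ) : Prop where
  nonneg : ∀ ⦃s t : ℝ⦄, 0 ≤ s → s ≤ t → t ≤ T → 0 ≤ ω s t
  superadd : ∀ ⦃r s t : ℝ⦄, 0 ≤ r → r ≤ s → s ≤ t → t ≤ T → ω r s + ω s t ≤ ω r t
  diag : ∀ ⦃s : ℝ⦄, 0 ≤ s → s ≤ T → ω s s = 0
  small : ∀ ε > (0:ℝ), ∃ h > (0:ℝ), ∀ ⦃s t : ℝ⦄, 0 ≤ s → s ≤ t → t ≤ T → t - s ≤ h → ω s t < ε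

/-- A remainder: a continuous increasing function `ϖ` with `2ϖ(x/2) ≤ κϖ(x)`. -/
structure IsRemainder (κ : ℝ) (ϖ : ℝ → ℝ) : Prop where
  contOn : ContinuousOn ϖ (Set.Ici 0)
  strictMonoOn : StrictMonoOn ϖ (Set.Ici 0)
  nonneg : ∀ x, 0 ≤ x → 0 ≤ ϖ x
  doubling : ∀ x, 0 < x → 2 * ϖ (x / 2) ≤ κ * ϖ x

/-- An almost flow on `[0,T]` with data `(ω, ϖ, N, γ, δT, η)`. -/
structure IsAlmostFlow {V : Type*} [MetricSpace V] (T : ℝ) (ω : ℝ → ℝ → ℝ)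
    (ϖ : ℝ → ℝ) (N : V → ℝ) (γ δT : ℝ) (η : ℝ → ℝ) (φ : ℝ → ℝ → V → V) : Prop where
  cont : ∀ a : V, ContinuousOn (fun p : ℝ × ℝ => φ p.2 p.1 a)
    {p : ℝ × ℝ | 0 ≤ p.1 ∧ p.1 ≤ p.2 ∧ p.2 ≤ T}
  flow_id : ∀ ⦃t : ℝ⦄, 0 ≤ t → t ≤ T → ∀ a, φ t t a = a
  close : ∀ ⦃s t : ℝ⦄, 0 ≤ s → s ≤ t → t ≤ T → ∀ a, dist (φ t s a) a ≤ δT * N a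
  lip : ∀ ⦃s t : ℝ⦄, 0 ≤ s → s ≤ t → t ≤ T → ∀ a b,
    dist (φ t s a) (φ t s b) ≤ (1 + δT) * dist a b + η (ω s t) * dist a b ^ γ
  almost : ∀ ⦃r s t : ℝ⦄, 0 ≤ r → r ≤ s → s ≤ t → t ≤ T → ∀ a,
    dist (φ t s (φ s r a)) (φ t r a) ≤ N a * ϖ (ω r t)


/-- An almost flow with `γ = 1` and `N` Lipschitz. -/
structure IsAlmostFlowOne {V : Type*} [MetricSpace V] (T : ℝ) (ω : ℝ → ℝ → ℝ)
    (ϖ : ℝ → ℝ) (N : V → ℝ) (δT : ℝ) (η : ℝ → ℝ) (φ : ℝ → ℝ → V → V) : Prop where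
  cont : ∀ a : V, ContinuousOn (fun p : ℝ × ℝ => φ p.2 p.1 a)
    {p : ℝ × ℝ | 0 ≤ p.1 ∧ p.1 ≤ p.2 ∧ p.2 ≤ T}
  flow_id : ∀ ⦃t : ℝ⦄, 0 ≤ t → t ≤ T → ∀ a, φ t t a = a
  close : ∀ ⦃s t : ℝ⦄, 0 ≤ s → s ≤ t → t ≤ T → ∀ a, dist (φ t s a) a ≤ δT * N a
  lip : ∀ ⦃s t : ℝ⦄, 0 ≤ s → s ≤ t → t ≤ T → ∀ a b,
    dist (φ t s a) (φ t s b) ≤ (1 + δT) * dist a b + η (ω s t) * dist a b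
  almost : ∀ ⦃r s t : ℝ⦄, 0 ≤ r → r ≤ s → s ≤ t → t ≤ T → ∀ a,
    dist (φ t s (φ s r a)) (φ t r a) ≤ N a * ϖ (ω r t)

/-- `Θ(π) = sup ϖ(ω_{s,s'})^{1-λ}` over successive points `s < s'` of `π`. -/
def Theta {T : ℝ} (ω : ℝ → ℝ → ℝ) (ϖ : ℝ → ℝ) (lam : ℝ) (π : IntervalPartition T) : ℝ :=
  ((π.points.zip π.points.tail).map fun p => ϖ (ω p.1 p.2) ^ (1 - lam)).foldr max 0

lemma remainder_zero' {κ : ℝ} {ϖ : ℝ → ℝ} (hκ0 : 0 < κ) (hκ2 : κ < 2)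
    (hϖ : IsRemainder κ ϖ) : ϖ 0 = 0 := by
  by_contra hne
  have h0 : 0 < ϖ 0 := lt_of_le_of_ne (hϖ.nonneg 0 le_rfl) (Ne.symm hne)
  have hkey : ∀ y : ℝ, 0 < y → 2 * ϖ 0 / κ ≤ ϖ y := by
    intro y hy
    have hd := hϖ.doubling y hy
    have hm : ϖ 0 < ϖ (y/2) :=
      hϖ.strictMonoOn Set.self_mem_Ici (Set.mem_Ici.mpr (by positivity)) (by positivity)
    rw [div_le_iff₀ hκ0]
    nlinarith
  have hc : ContinuousWithinAt ϖ (Set.Ici 0) 0 := hϖ.contOn 0 Set.self_mem_Ici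
  have ht : Filter.Tendsto ϖ (nhdsWithin 0 (Set.Ioi (0:ℝ))) (nhds (ϖ 0)) :=
    (hc.tendsto).mono_left (nhdsWithin_mono 0 Set.Ioi_subset_Ici_self)
  have hev : ∀ᶠ y in nhdsWithin 0 (Set.Ioi (0:ℝ)), 2 * ϖ 0 / κ ≤ ϖ y := by
    filter_upwards [self_mem_nhdsWithin] with y hy using hkey y hy
  have hle : 2 * ϖ 0 / κ ≤ ϖ 0 := ge_of_tendsto ht hev
  rw [div_le_iff₀ hκ0] at hle
  nlinarith

lemma remainder_small' {κ : ℝ} {ϖ : ℝ → ℝ} (hκ0 : 0 < κ) (hκ2 : κ < 2)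
    (hϖ : IsRemainder κ ϖ) : ∀ r : ℝ, 0 < r → ∃ y : ℝ, 0 < y ∧ ϖ y < r := by
  intro r hr
  have h0 := remainder_zero' hκ0 hκ2 hϖ
  have hc : Filter.Tendsto ϖ (nhdsWithin 0 (Set.Ici (0:ℝ))) (nhds (ϖ 0)) :=
    (hϖ.contOn 0 Set.self_mem_Ici).tendsto
  rw [h0] at hc
  have ht : Filter.Tendsto ϖ (nhdsWithin 0 (Set.Ioi (0:ℝ))) (nhds 0) :=
    hc.mono_left (nhdsWithin_mono 0 Set.Ioi_subset_Ici_self)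
  have hev : ∀ᶠ y in nhdsWithin 0 (Set.Ioi (0:ℝ)), ϖ y < r :=
    ht.eventually_lt_const hr
  obtain ⟨y, hy1, hy2⟩ := (hev.and self_mem_nhdsWithin).exists
  exact ⟨y, hy2, hy1⟩

lemma control_split' {T : ℝ} {ω : ℝ → ℝ → ℝ} (hω : IsControl T ω)
    {s t : ℝ} (hs : 0 ≤ s) (hst : s ≤ t) (ht : t ≤ T) {ε : ℝ} (hε : 0 < ε) :
    ∃ u v : ℝ, s ≤ u ∧ u ≤ v ∧ v ≤ t ∧
      ω s u ≤ ω s t / 2 ∧ ω u v < ε ∧ ω v t ≤ ω s t / 2 := by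
  obtain ⟨h, hh0, hsmall⟩ := hω.small ε hε
  set P : Set ℝ := {x | x ∈ Set.Icc s t ∧ ω s x ≤ ω s t / 2} with hP
  have hsP : s ∈ P := by
    refine ⟨⟨le_rfl, hst⟩, ?_⟩
    rw [hω.diag hs (hst.trans ht)]
    exact div_nonneg (hω.nonneg hs hst ht) (by norm_num)
  have hPbdd : BddAbove P := ⟨t, fun x hx => hx.1.2⟩
  have hPne : P.Nonempty := ⟨s, hsP⟩
  obtain ⟨u, huP, hu⟩ := exists_lt_of_lt_csSup hPne
    (show sSup P - h/2 < sSup P by linarith)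
  have hsu : s ≤ u := huP.1.1
  have hut : u ≤ t := huP.1.2
  refine ⟨u, min (u + h) t, hsu, le_min (by linarith) hut, min_le_right _ _, huP.2, ?_, ?_⟩
  · refine hsmall (hs.trans hsu) (le_min (by linarith) hut)
      ((min_le_right _ _).trans ht) ?_
    have := min_le_left (u + h) t; linarith
  · rcases le_total t (u + h) with hle | hle
    · rw [min_eq_right hle, hω.diag (hs.trans hst) ht]
      exact div_nonneg (hω.nonneg hs hst ht) (by norm_num)
    · rw [min_eq_left hle]
      have hnm : (u + h) ∉ P := by
        intro hmem
        have h1 := le_csSup hPbdd hmem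
        linarith
      have hgt : ω s t / 2 < ω s (u + h) := by
        by_contra hc; push_neg at hc
        exact hnm ⟨⟨by linarith, hle⟩, hc⟩
      have hsup := hω.superadd hs (show s ≤ u + h by linarith) hle ht
      linarith


set_option maxHeartbeats 1000000

/-- Corollary 9. Let `ψ` and `χ` be two almost flows in the same galaxy,
with `ψ` Lipschitz (constant `1+δ_T`) and `N(χ_{t,s}(a)) ≤ (1+δ_T)N(a)`, and with
`Δ_N(ψ_{t,s}∘ψ_{s,r}, ψ_{t,r}) ≤ β_ψ·ϖ(ω_{r,t})`,
`Δ_N(χ_{t,s}∘χ_{s,r}, χ_{t,r}) ≤ β_χ·ϖ(ω_{r,t})`. Then, for every admissible `λ`,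
`Δ_{N,ϖ}(ψ,χ) ≤ 2(2+3δ_T+δ_T²)(β_ψ+β_χ)/(2−κ_λ(2+3δ_T+δ_T²))`. -/
theorem statement14 {V : Type*} [MetricSpace V]
    (T : ℝ) (hT : 0 < T)
    (ω : ℝ → ℝ → ℝ) (hω : IsControl T ω)
    (κ : ℝ) (hκ : κ ∈ Set.Ioo (0:ℝ) 1)
    (ϖ : ℝ → ℝ) (hϖ : IsRemainder κ ϖ)
    (N : V → ℝ) (hN1 : ∀ a, 1 ≤ N a)
    (CN : NNReal) (hNlip : LipschitzWith CN N)
    (δT : ℝ) (hδT : 0 ≤ δT)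
    (η : ℝ → ℝ) (hηnonneg : ∀ x, 0 ≤ x → 0 ≤ η x)
    (hη : ∀ ⦃s t : ℝ⦄, 0 ≤ s → s ≤ t → t ≤ T →
      η (ω s t) * ϖ (ω s t) ≤ δT * ϖ (ω s t))
    (ψ χ : ℝ → ℝ → V → V)
    (hψ : IsAlmostFlowOne T ω ϖ N δT η ψ)
    (hχ : IsAlmostFlowOne T ω ϖ N δT η χ)
    (hψlip : ∀ ⦃s t : ℝ⦄, 0 ≤ s → s ≤ t → t ≤ T → ∀ a b : V,
      dist (ψ t s a) (ψ t s b) ≤ (1 + δT) * dist a b)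
    (hχN : ∀ ⦃s t : ℝ⦄, 0 ≤ s → s ≤ t → t ≤ T → ∀ a : V,
      N (χ t s a) ≤ (1 + δT) * N a)
    (βψ βχ : ℝ) (hβψ : 0 ≤ βψ) (hβχ : 0 ≤ βχ)
    (hβψ' : ∀ ⦃r s t : ℝ⦄, 0 ≤ r → r ≤ s → s ≤ t → t ≤ T → ∀ a : V,
      dist (ψ t s (ψ s r a)) (ψ t r a) ≤ βψ * ϖ (ω r t) * N a)
    (hβχ' : ∀ ⦃r s t : ℝ⦄, 0 ≤ r → r ≤ s → s ≤ t → t ≤ T → ∀ a : V,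
      dist (χ t s (χ s r a)) (χ t r a) ≤ βχ * ϖ (ω r t) * N a)
    (C : ℝ)
    (hgalaxy : ∀ ⦃s t : ℝ⦄, 0 ≤ s → s ≤ t → t ≤ T → ∀ a : V,
      dist (ψ t s a) (χ t s a) ≤ C * N a * ϖ (ω s t)) :
    ∀ lam : ℝ, 1 / (1 - Real.logb 2 κ) < lam → lam < 1 →
      (2:ℝ) ^ (1 - lam) * κ ^ lam * (2 + 3 * δT + δT ^ 2) < 2 →
      ∀ ⦃s t : ℝ⦄, 0 ≤ s → s ≤ t → t ≤ T → ∀ a : V,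
        dist (ψ t s a) (χ t s a) ≤
          (2 * (2 + 3 * δT + δT ^ 2) * (βψ + βχ) /
            (2 - (2:ℝ) ^ (1 - lam) * κ ^ lam * (2 + 3 * δT + δT ^ 2))) *
          N a * ϖ (ω s t) := by
  intro lam _hlam1 hlam2 hklam s t hs hst htT a
  obtain ⟨hκ0, hκ1⟩ := hκ
  have hκ2 : κ < 2 := by linarith
  have hϖzero : ϖ 0 = 0 := remainder_zero' hκ0 hκ2 hϖ
  have hδ1 : (0:ℝ) < 1 + δT := by linarith
  have hB : 0 ≤ βψ + βχ := by linarith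
  set x := (2:ℝ) ^ (1 - lam) * κ ^ lam with hxdef
  have hx0 : 0 < x := mul_pos (Real.rpow_pos_of_pos two_pos _) (Real.rpow_pos_of_pos hκ0 _)
  have hκx : κ ≤ x := by
    have h3 : κ ^ (1 - lam) ≤ (2:ℝ) ^ (1 - lam) :=
      Real.rpow_le_rpow hκ0.le (by linarith) (by linarith)
    calc κ = κ ^ ((1 - lam) + lam) := by rw [show (1 - lam) + lam = 1 by ring, Real.rpow_one]
      _ = κ ^ (1 - lam) * κ ^ lam := Real.rpow_add hκ0 _ _
      _ ≤ x := mul_le_mul_of_nonneg_right h3 (Real.rpow_nonneg hκ0.le lam)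
  have h2xA : 0 < 2 - x * (2 + 3 * δT + δT ^ 2) := by linarith
  -- the set of ratios and its supremum
  set S : Set ℝ := {q | ∃ s' t' : ℝ, ∃ b : V, 0 ≤ s' ∧ s' ≤ t' ∧ t' ≤ T ∧
      q = dist (ψ t' s' b) (χ t' s' b) / (N b * ϖ (ω s' t'))} with hSdef
  have hSbdd : BddAbove S := by
    refine ⟨max C 0, ?_⟩
    rintro q ⟨s', t', b, hs', hst', ht', rfl⟩
    have hNb0 : (0:ℝ) < N b := lt_of_lt_of_le one_pos (hN1 b)
    have hϖnn : 0 ≤ ϖ (ω s' t') := hϖ.nonneg _ (hω.nonneg hs' hst' ht')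
    rcases eq_or_lt_of_le hϖnn with hz | hz
    · rw [← hz, mul_zero, div_zero]; exact le_max_right _ _
    · have hpos : 0 < N b * ϖ (ω s' t') := mul_pos hNb0 hz
      refine le_trans ?_ (le_max_left C 0)
      rw [div_le_iff₀ hpos]
      have := hgalaxy hs' hst' ht' b
      linarith [this, mul_assoc C (N b) (ϖ (ω s' t'))]
  have hSne : S.Nonempty := ⟨_, 0, 0, a, le_rfl, le_rfl, hT.le, rfl⟩
  set M := sSup S with hMdef
  have hM0 : 0 ≤ M := by
    have hmem : (0:ℝ) ∈ S := by
      refine ⟨0, 0, a, le_rfl, le_rfl, hT.le, ?_⟩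
      rw [hψ.flow_id le_rfl hT.le a, hχ.flow_id le_rfl hT.le a, dist_self, zero_div]
    exact le_csSup hSbdd hmem
  -- the key sup property
  have key : ∀ s' t' : ℝ, 0 ≤ s' → s' ≤ t' → t' ≤ T → ∀ b : V,
      dist (ψ t' s' b) (χ t' s' b) ≤ M * (N b * ϖ (ω s' t')) := by
    intro s' t' hs' hst' ht' b
    have hNb0 : (0:ℝ) < N b := lt_of_lt_of_le one_pos (hN1 b)
    have hϖnn : 0 ≤ ϖ (ω s' t') := hϖ.nonneg _ (hω.nonneg hs' hst' ht')
    rcases eq_or_lt_of_le hϖnn with hz | hz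
    · have hg := hgalaxy hs' hst' ht' b
      rw [← hz, mul_zero] at hg ⊢
      rw [mul_zero]
      linarith
    · have hpos : 0 < N b * ϖ (ω s' t') := mul_pos hNb0 hz
      have hmem : dist (ψ t' s' b) (χ t' s' b) / (N b * ϖ (ω s' t')) ∈ S :=
        ⟨s', t', b, hs', hst', ht', rfl⟩
      have hle := le_csSup hSbdd hmem
      rw [div_le_iff₀ hpos] at hle
      linarith
  -- the self-improving estimate
  have hrec : M ≤ (2 + δT) * (βψ + βχ) + (1 + δT) * (2 + δT) * (κ / 2) * M := by
    have hRHS0 : 0 ≤ (2 + δT) * (βψ + βχ) + (1 + δT) * (2 + δT) * (κ / 2) * M := by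
      have h1 : 0 ≤ (2 + δT) * (βψ + βχ) := mul_nonneg (by linarith) hB
      have h2 : 0 ≤ (1 + δT) * (2 + δT) * (κ / 2) * M :=
        mul_nonneg (mul_nonneg (mul_nonneg hδ1.le (by linarith)) (by linarith)) hM0
      linarith
    refine csSup_le hSne ?_
    rintro q ⟨s', t', b, hs', hst', ht', rfl⟩
    have hNb1 : (1:ℝ) ≤ N b := hN1 b
    have hNb0 : (0:ℝ) < N b := lt_of_lt_of_le one_pos hNb1
    have hϖnn : 0 ≤ ϖ (ω s' t') := hϖ.nonneg _ (hω.nonneg hs' hst' ht')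
    rcases eq_or_lt_of_le hϖnn with hz | hz
    · rw [← hz, mul_zero, div_zero]; exact hRHS0
    · have hW : 0 < ω s' t' := by
        rcases eq_or_lt_of_le (hω.nonneg hs' hst' ht') with h' | h'
        · rw [← h', hϖzero] at hz; exact absurd hz (lt_irrefl 0)
        · exact h'
      have hpos : 0 < N b * ϖ (ω s' t') := mul_pos hNb0 hz
      rw [div_le_iff₀ hpos]
      refine le_of_forall_pos_le_add ?_
      intro ε hε
      have hQ0 : 0 < (1 + δT) ^ 2 * (M + 1) * N b :=
        mul_pos (mul_pos (by positivity) (by linarith)) hNb0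
      obtain ⟨ρ, hρ0, hρ⟩ := remainder_small' hκ0 hκ2 hϖ
        (ε / ((1 + δT) ^ 2 * (M + 1) * N b)) (div_pos hε hQ0)
      obtain ⟨u, v, hsu, huv, hvt, hω1, hω2, hω3⟩ := control_split' hω hs' hst' ht' hρ0
      have h0u : 0 ≤ u := hs'.trans hsu
      have h0v : 0 ≤ v := h0u.trans huv
      have hut' : u ≤ t' := huv.trans hvt
      have hvT : v ≤ T := hvt.trans ht'
      have huT : u ≤ T := hut'.trans ht'
      -- monotonicity facts for ϖ
      have ϖmono : ∀ {p q : ℝ}, 0 ≤ p → p ≤ q → ϖ p ≤ ϖ q := by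
        intro p q hp hpq
        exact hϖ.strictMonoOn.monotoneOn (Set.mem_Ici.mpr hp)
          (Set.mem_Ici.mpr (hp.trans hpq)) hpq
      have hϖW0 : 0 ≤ ϖ (ω s' t') := hϖnn
      have hdoub : 2 * ϖ (ω s' t' / 2) ≤ κ * ϖ (ω s' t') := hϖ.doubling _ hW
      have hϖ1 : ϖ (ω s' u) ≤ κ / 2 * ϖ (ω s' t') := by
        have := ϖmono (hω.nonneg hs' hsu huT) hω1
        linarith
      have hϖ3 : ϖ (ω v t') ≤ κ / 2 * ϖ (ω s' t') := by
        have := ϖmono (hω.nonneg h0v hvt ht') hω3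
        linarith
      have hϖ2 : ϖ (ω u v) ≤ ϖ ρ := ϖmono (hω.nonneg h0u huv hvT) hω2.le
      have hϖut : ϖ (ω u t') ≤ ϖ (ω s' t') := by
        have hsup := hω.superadd hs' hsu hut' ht'
        have h1 : ω u t' ≤ ω s' t' := by
          have := hω.nonneg hs' hsu huT; linarith
        exact ϖmono (hω.nonneg h0u hut' ht') h1
      -- N bounds
      have hNb10 : (0:ℝ) ≤ N (χ u s' b) := le_trans zero_le_one (hN1 _)
      have hNc10 : (0:ℝ) ≤ N (χ v u (χ u s' b)) := le_trans zero_le_one (hN1 _)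
      have hNbb : N (χ u s' b) ≤ (1 + δT) * N b := hχN hs' hsu huT b
      have hNcc : N (χ v u (χ u s' b)) ≤ (1 + δT) * ((1 + δT) * N b) :=
        le_trans (hχN h0u huv hvT _) (mul_le_mul_of_nonneg_left hNbb hδ1.le)
      -- the seven distance bounds
      have h01 : dist (ψ t' s' b) (ψ t' u (ψ u s' b)) ≤ βψ * ϖ (ω s' t') * N b := by
        rw [dist_comm]; exact hβψ' hs' hsu hut' ht' b
      have h12 : dist (ψ t' u (ψ u s' b)) (ψ t' u (χ u s' b)) ≤
          (1 + δT) * (M * (N b * ϖ (ω s' u))) :=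
        le_trans (hψlip h0u hut' ht' _ _)
          (mul_le_mul_of_nonneg_left (key s' u hs' hsu huT b) hδ1.le)
      have h23 : dist (ψ t' u (χ u s' b)) (ψ t' v (ψ v u (χ u s' b))) ≤
          βψ * ϖ (ω u t') * N (χ u s' b) := by
        rw [dist_comm]; exact hβψ' h0u huv hvt ht' _
      have h34 : dist (ψ t' v (ψ v u (χ u s' b))) (ψ t' v (χ v u (χ u s' b))) ≤
          (1 + δT) * (M * (N (χ u s' b) * ϖ (ω u v))) :=
        le_trans (hψlip h0v hvt ht' _ _)
          (mul_le_mul_of_nonneg_left (key u v h0u huv hvT _) hδ1.le)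
      have h45 : dist (ψ t' v (χ v u (χ u s' b))) (χ t' v (χ v u (χ u s' b))) ≤
          M * (N (χ v u (χ u s' b)) * ϖ (ω v t')) := key v t' h0v hvt ht' _
      have h56 : dist (χ t' v (χ v u (χ u s' b))) (χ t' u (χ u s' b)) ≤
          βχ * ϖ (ω u t') * N (χ u s' b) := hβχ' h0u huv hvt ht' _
      have h67 : dist (χ t' u (χ u s' b)) (χ t' s' b) ≤ βχ * ϖ (ω s' t') * N b :=
        hβχ' hs' hsu hut' ht' b
      -- upper bounds in monomials
      have u2 : (1 + δT) * (M * (N b * ϖ (ω s' u))) ≤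
          (1 + δT) * (M * (N b * (κ / 2 * ϖ (ω s' t')))) :=
        mul_le_mul_of_nonneg_left
          (mul_le_mul_of_nonneg_left
            (mul_le_mul_of_nonneg_left hϖ1 hNb0.le) hM0) hδ1.le
      have u3 : βψ * ϖ (ω u t') * N (χ u s' b) ≤ βψ * ϖ (ω s' t') * ((1 + δT) * N b) :=
        mul_le_mul (mul_le_mul_of_nonneg_left hϖut hβψ) hNbb hNb10
          (mul_nonneg hβψ hϖW0)
      have u6 : βχ * ϖ (ω u t') * N (χ u s' b) ≤ βχ * ϖ (ω s' t') * ((1 + δT) * N b) :=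
        mul_le_mul (mul_le_mul_of_nonneg_left hϖut hβχ) hNbb hNb10
          (mul_nonneg hβχ hϖW0)
      have u5 : M * (N (χ v u (χ u s' b)) * ϖ (ω v t')) ≤
          M * ((1 + δT) * ((1 + δT) * N b) * (κ / 2 * ϖ (ω s' t'))) := by
        refine mul_le_mul_of_nonneg_left ?_ hM0
        exact mul_le_mul hNcc hϖ3 (hϖ.nonneg _ (hω.nonneg h0v hvt ht'))
          (by positivity)
      have hϖρ0 : 0 ≤ ϖ ρ := hϖ.nonneg ρ hρ0.le
      have u4 : (1 + δT) * (M * (N (χ u s' b) * ϖ (ω u v))) < ε := by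
        have i1 : N (χ u s' b) * ϖ (ω u v) ≤ (1 + δT) * N b * ϖ ρ :=
          mul_le_mul hNbb hϖ2 (hϖ.nonneg _ (hω.nonneg h0u huv hvT))
            (by positivity)
        have i2 : M * (N (χ u s' b) * ϖ (ω u v)) ≤ M * ((1 + δT) * N b * ϖ ρ) :=
          mul_le_mul_of_nonneg_left i1 hM0
        have i3 : (1 + δT) * (M * (N (χ u s' b) * ϖ (ω u v))) ≤
            (1 + δT) * (M * ((1 + δT) * N b * ϖ ρ)) :=
          mul_le_mul_of_nonneg_left i2 hδ1.le
        have hQρ : ϖ ρ * ((1 + δT) ^ 2 * (M + 1) * N b) < ε := (lt_div_iff₀ hQ0).mp hρ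
        have hint : 0 ≤ (1 + δT) * (1 + δT) * N b * ϖ ρ :=
          mul_nonneg (mul_nonneg (mul_nonneg hδ1.le hδ1.le) hNb0.le) hϖρ0
        have i4 : (1 + δT) * (1 + δT) * N b * ϖ ρ * M ≤
            (1 + δT) * (1 + δT) * N b * ϖ ρ * (M + 1) :=
          mul_le_mul_of_nonneg_left (by linarith) hint
        have i5 : (1 + δT) * (M * ((1 + δT) * N b * ϖ ρ)) ≤
            ϖ ρ * ((1 + δT) ^ 2 * (M + 1) * N b) := by
          have e1 : (1 + δT) * (M * ((1 + δT) * N b * ϖ ρ)) =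
              (1 + δT) * (1 + δT) * N b * ϖ ρ * M := by ring
          have e2 : ϖ ρ * ((1 + δT) ^ 2 * (M + 1) * N b) =
              (1 + δT) * (1 + δT) * N b * ϖ ρ * (M + 1) := by ring
          rw [e1, e2]; exact i4
        exact lt_of_le_of_lt (i3.trans i5) hQρ
      -- triangle inequality chain
      have tA := dist_triangle (ψ t' s' b) (ψ t' u (ψ u s' b)) (χ t' s' b)
      have tB := dist_triangle (ψ t' u (ψ u s' b)) (ψ t' u (χ u s' b)) (χ t' s' b)
      have tC := dist_triangle (ψ t' u (χ u s' b)) (ψ t' v (ψ v u (χ u s' b))) (χ t' s' b)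
      have tD := dist_triangle (ψ t' v (ψ v u (χ u s' b))) (ψ t' v (χ v u (χ u s' b))) (χ t' s' b)
      have tE := dist_triangle (ψ t' v (χ v u (χ u s' b))) (χ t' v (χ v u (χ u s' b))) (χ t' s' b)
      have tF := dist_triangle (χ t' v (χ v u (χ u s' b))) (χ t' u (χ u s' b)) (χ t' s' b)
      have sum1 : dist (ψ t' s' b) (χ t' s' b) ≤
          dist (ψ t' s' b) (ψ t' u (ψ u s' b)) +
          dist (ψ t' u (ψ u s' b)) (ψ t' u (χ u s' b)) +
          dist (ψ t' u (χ u s' b)) (ψ t' v (ψ v u (χ u s' b))) +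
          dist (ψ t' v (ψ v u (χ u s' b))) (ψ t' v (χ v u (χ u s' b))) +
          dist (ψ t' v (χ v u (χ u s' b))) (χ t' v (χ v u (χ u s' b))) +
          dist (χ t' v (χ v u (χ u s' b))) (χ t' u (χ u s' b)) +
          dist (χ t' u (χ u s' b)) (χ t' s' b) := by
        linarith [tA, tB, tC, tD, tE, tF]
      calc dist (ψ t' s' b) (χ t' s' b) ≤ _ := sum1
        _ ≤ βψ * ϖ (ω s' t') * N b +
            (1 + δT) * (M * (N b * (κ / 2 * ϖ (ω s' t')))) +
            βψ * ϖ (ω s' t') * ((1 + δT) * N b) +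
            ε +
            M * ((1 + δT) * ((1 + δT) * N b) * (κ / 2 * ϖ (ω s' t'))) +
            βχ * ϖ (ω s' t') * ((1 + δT) * N b) +
            βχ * ϖ (ω s' t') * N b := by
          refine add_le_add (add_le_add (add_le_add (add_le_add (add_le_add
            (add_le_add ?_ ?_) ?_) ?_) ?_) ?_) ?_
          · exact h01
          · exact h12.trans u2
          · exact h23.trans u3
          · exact (h34.trans u4.le)
          · exact h45.trans u5
          · exact h56.trans u6
          · exact h67
        _ = ((2 + δT) * (βψ + βχ) + (1 + δT) * (2 + δT) * (κ / 2) * M) *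
            (N b * ϖ (ω s' t')) + ε := by ring
  -- solve for M
  have hMK : M ≤ 2 * (2 + 3 * δT + δT ^ 2) * (βψ + βχ) /
      (2 - x * (2 + 3 * δT + δT ^ 2)) := by
    rw [le_div_iff₀ h2xA]
    have hA0 : (0:ℝ) ≤ 2 + 3 * δT + δT ^ 2 := by positivity
    have hd : 0 ≤ M * ((x - κ) * (2 + 3 * δT + δT ^ 2)) :=
      mul_nonneg hM0 (mul_nonneg (sub_nonneg.mpr hκx) hA0)
    have e2 : M * (2 - x * (2 + 3 * δT + δT ^ 2)) ≤
        M * (2 - κ * (2 + 3 * δT + δT ^ 2)) := by linarith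
    have e3 : 0 ≤ δT * (βψ + βχ) := mul_nonneg hδT hB
    have e4 : 0 ≤ δT * δT * (βψ + βχ) := mul_nonneg (mul_nonneg hδT hδT) hB
    have e5 : M * (2 - κ * (2 + 3 * δT + δT ^ 2)) ≤ 2 * (2 + δT) * (βψ + βχ) := by
      linarith [hrec]
    linarith
  have hk := key s t hs hst htT a
  have hP0 : 0 ≤ N a * ϖ (ω s t) :=
    mul_nonneg (le_trans zero_le_one (hN1 a)) (hϖ.nonneg _ (hω.nonneg hs hst htT))
  calc dist (ψ t s a) (χ t s a) ≤ M * (N a * ϖ (ω s t)) := hk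
    _ ≤ (2 * (2 + 3 * δT + δT ^ 2) * (βψ + βχ) /
        (2 - x * (2 + 3 * δT + δT ^ 2))) * (N a * ϖ (ω s t)) :=
      mul_le_mul_of_nonneg_right hMK hP0
    _ = (2 * (2 + 3 * δT + δT ^ 2) * (βψ + βχ) /
        (2 - x * (2 + 3 * δT + δT ^ 2))) * N a * ϖ (ω s t) := (mul_assoc _ _ _).symm

end
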